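/- arXiv:2507.07391 — 4 statements merged into one kernel-verified Lean document; each statement's English description precedes it below -/
import Mathlib

section
/- Let A, B ∈ SL(2,ℝ). The following are equivalent: (a) A·B ≠ B·A; (b) for every 2×2 real matrix Z with tr Z = 0 there exist 2×2 real matrices ξ, η with tr ξ = 0 and tr η = 0 such that [ξ, A·B·A⁻¹]·(A·B⁻¹·A⁻¹) + A·[η, B·A⁻¹·B⁻¹]·(B·A·B⁻¹·A⁻¹) = Z, where [X,Y] := X·Y − Y·X. (This says the differential of the commutator map R(A,B) = ABA⁻¹B⁻¹ on SL(2,ℝ)×SL(2,ℝ) is surjective at (A,B) exactly when A and B do not commute.) -/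
open Matrix

/-- `SL(2,ℝ)`: the group of 2×2 real matrices of determinant 1. -/
abbrev SL2 : Type := Matrix.SpecialLinearGroup (Fin 2) ℝ

/-- The trace of an element of `SL(2,ℝ)`, as a matrix. -/
noncomputable def trSL (A : SL2) : ℝ := Matrix.trace (A : Matrix (Fin 2) (Fin 2) ℝ)

/-- The underlying matrix of an element of SL(2,ℝ). -/
def toMat (X : SL2) : Matrix (Fin 2) (Fin 2) ℝ := X

namespace Stmt16Aux

abbrev M2 := Matrix (Fin 2) (Fin 2) ℝ

lemma tm_inj : Function.Injective toMat := fun _ _ h => Subtype.ext h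

lemma tm_eq {X Y Z : SL2} (h : X * Y = Z) : toMat X * toMat Y = toMat Z :=
  congrArg toMat h

lemma tm_eq_one {X Y : SL2} (h : X * Y = 1) : toMat X * toMat Y = 1 :=
  congrArg toMat h

lemma tm3_eq_one {X Y Z : SL2} (h : X * (Y * Z) = 1) :
    toMat X * (toMat Y * toMat Z) = 1 :=
  congrArg toMat h

lemma eq_zero_of_forall_trace (m : M2) (h : ∀ ξ : M2, Matrix.trace (ξ * m) = 0) : m = 0 := by
  have h1 := h !![1,0;0,0]
  have h2 := h !![0,1;0,0]
  have h3 := h !![0,0;1,0]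
  have h4 := h !![0,0;0,1]
  simp [Matrix.trace_fin_two, Matrix.mul_apply, Fin.sum_univ_two, Matrix.vecMul,
    dotProduct] at h1 h2 h3 h4
  ext i j
  fin_cases i <;> fin_cases j <;> simp_all

lemma decomp (X : M2) : X = X 0 0 • !![1,0;0,0] + X 0 1 • !![0,1;0,0]
    + X 1 0 • !![0,0;1,0] + X 1 1 • !![0,0;0,1] := by
  ext i j
  fin_cases i <;> fin_cases j <;> simp

lemma pairing (f : Module.Dual ℝ M2) (X : M2) :
    Matrix.trace (X * !![f !![1,0;0,0], f !![0,0;1,0]; f !![0,1;0,0], f !![0,0;0,1]]) = f X := by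
  have : f X = X 0 0 * f !![1,0;0,0] + X 0 1 * f !![0,1;0,0]
      + X 1 0 * f !![0,0;1,0] + X 1 1 * f !![0,0;0,1] := by
    conv_lhs => rw [decomp X]
    rw [map_add, map_add, map_add, _root_.map_smul, _root_.map_smul, _root_.map_smul,
      _root_.map_smul]
    simp [smul_eq_mul]
  rw [this]
  simp [Matrix.trace_fin_two, Matrix.mul_apply, Fin.sum_univ_two]
  ring

lemma commutes_span {v x : M2} (hvtr : Matrix.trace v = 0) (hv0 : v ≠ 0)
    (hx : x * v = v * x) : ∃ s t : ℝ, x = s • (1 : M2) + t • v := by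
  have hv11 : v 1 1 = - v 0 0 := by
    simp [Matrix.trace_fin_two] at hvtr; linarith
  have hent : ∀ i j, (x * v) i j = (v * x) i j := fun i j => by rw [hx]
  have e00 := hent 0 0
  have e01 := hent 0 1
  have e10 := hent 1 0
  simp [Matrix.mul_apply, Fin.sum_univ_two, hv11] at e00 e01 e10
  have hne : v 0 0 ≠ 0 ∨ v 0 1 ≠ 0 ∨ v 1 0 ≠ 0 := by
    by_contra hc
    push_neg at hc
    exact hv0 (by ext i j; fin_cases i <;> fin_cases j <;>
      simp [hc.1, hc.2.1, hc.2.2, hv11])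
  rcases hne with h0 | h0 | h0
  · refine ⟨(x 0 0 + x 1 1)/2, (x 0 0 - x 1 1)/(2 * v 0 0), ?_⟩
    ext i j
    fin_cases i <;> fin_cases j <;>
      simp [Matrix.one_apply, hv11] <;> field_simp <;>
      first
        | ring1
        | linear_combination e00 | linear_combination -e00
        | linear_combination e01 | linear_combination -e01
        | linear_combination e10 | linear_combination -e10
        | linear_combination 2*e01 | linear_combination -2*e01
        | linear_combination 2*e10 | linear_combination -2*e10
  · refine ⟨x 0 0 - x 0 1 * v 0 0 / v 0 1, x 0 1 / v 0 1, ?_⟩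
    ext i j
    fin_cases i <;> fin_cases j <;>
      simp [Matrix.one_apply, hv11] <;> field_simp <;>
      first
        | ring1
        | linear_combination e00 | linear_combination -e00
        | linear_combination e01 | linear_combination -e01
        | linear_combination e10 | linear_combination -e10
        | linear_combination 2*e01 | linear_combination -2*e01
        | linear_combination 2*e10 | linear_combination -2*e10
  · refine ⟨x 0 0 - x 1 0 * v 0 0 / v 1 0, x 1 0 / v 1 0, ?_⟩
    ext i j
    fin_cases i <;> fin_cases j <;>
      simp [Matrix.one_apply, hv11] <;> field_simp <;>
      first
        | ring1
        | linear_combination e00 | linear_combination -e00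
        | linear_combination e01 | linear_combination -e01
        | linear_combination e10 | linear_combination -e10
        | linear_combination 2*e01 | linear_combination -2*e01
        | linear_combination 2*e10 | linear_combination -2*e10

lemma commutant {v x y : M2} (hvtr : Matrix.trace v = 0) (hv0 : v ≠ 0)
    (hx : x * v = v * x) (hy : y * v = v * y) : x * y = y * x := by
  obtain ⟨s, t, rfl⟩ := commutes_span hvtr hv0 hx
  obtain ⟨s', t', rfl⟩ := commutes_span hvtr hv0 hy
  simp only [add_mul, mul_add, smul_mul_assoc, mul_smul_comm, smul_smul, smul_add,
    one_mul, mul_one]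
  rw [mul_comm s s', mul_comm t s', mul_comm t t', mul_comm s t']
  abel

lemma comm_inv {x x' v : M2} (h1 : x * x' = 1) (h2 : x' * x = 1) (h : x * v = v * x) :
    x' * v = v * x' := by
  calc x' * v = x' * (v * (x * x')) := by rw [h1, mul_one]
    _ = x' * ((v * x) * x') := by rw [mul_assoc]
    _ = x' * ((x * v) * x') := by rw [h]
    _ = ((x' * x) * v) * x' := by simp only [mul_assoc]
    _ = v * x' := by rw [h2, one_mul]

lemma comm_mul {x y v : M2} (hx : x * v = v * x) (hy : y * v = v * y) :
    (x * y) * v = v * (x * y) := by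
  calc (x * y) * v = x * (y * v) := by rw [mul_assoc]
    _ = x * (v * y) := by rw [hy]
    _ = (x * v) * y := by rw [mul_assoc]
    _ = (v * x) * y := by rw [hx]
    _ = v * (x * y) := by rw [mul_assoc]

noncomputable def Phi (a c c₂ d k : M2) : M2 × M2 →ₗ[ℝ] M2 where
  toFun p := (p.1 * c - c * p.1) * c₂ + a * ((p.2 * d - d * p.2) * k)
  map_add' p q := by
    simp only [Prod.fst_add, Prod.snd_add]
    noncomm_ring
  map_smul' t p := by
    simp only [Prod.smul_fst, Prod.smul_snd, RingHom.id_apply]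
    simp [smul_mul_assoc, mul_smul_comm, smul_sub, smul_add, mul_sub, sub_mul]

lemma Phi_apply (a c c₂ d k ξ η : M2) :
    Phi a c c₂ d k (ξ, η) = (ξ * c - c * ξ) * c₂ + a * ((η * d - d * η) * k) := rfl

lemma trace_expr (a c c₂ d k v ξ η : M2) :
    Matrix.trace (((ξ * c - c * ξ) * c₂ + a * ((η * d - d * η) * k)) * v)
      = Matrix.trace (ξ * (c * (c₂ * v) - c₂ * (v * c)))
        + Matrix.trace (η * (d * (k * (v * a)) - k * (v * (a * d)))) := by
  simp only [sub_mul, add_mul, mul_sub, mul_add, Matrix.trace_add, Matrix.trace_sub, mul_assoc]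
  rw [Matrix.trace_mul_comm c (ξ * (c₂ * v)),
    Matrix.trace_mul_comm a (η * (d * (k * v))),
    Matrix.trace_mul_comm a (d * (η * (k * v)))]
  simp only [mul_assoc]
  rw [Matrix.trace_mul_comm d (η * (k * (v * a)))]
  simp only [mul_assoc]

end Stmt16Aux

open Stmt16Aux

lemma backward (A B : SL2) (hAB : A * B = B * A)
    (hsur : ∀ Z : Matrix (Fin 2) (Fin 2) ℝ, Matrix.trace Z = 0 →
        ∃ ξ η : Matrix (Fin 2) (Fin 2) ℝ, Matrix.trace ξ = 0 ∧ Matrix.trace η = 0 ∧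
          (ξ * toMat (A * B * A⁻¹) - toMat (A * B * A⁻¹) * ξ) * toMat (A * B⁻¹ * A⁻¹) +
            toMat A * ((η * toMat (B * A⁻¹ * B⁻¹) - toMat (B * A⁻¹ * B⁻¹) * η) *
              toMat (B * A * B⁻¹ * A⁻¹)) = Z) : False := by
  have hab : toMat A * toMat B = toMat B * toMat A := congrArg toMat hAB
  -- choose a nonzero traceless v commuting with A and B
  obtain ⟨v, hvtr, hv0, hva, hvb⟩ : ∃ v : M2, Matrix.trace v = 0 ∧ v ≠ 0 ∧
      toMat A * v = v * toMat A ∧ toMat B * v = v * toMat B := by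
    by_cases hα : toMat A - (Matrix.trace (toMat A) / 2) • 1 = 0
    · by_cases hβ : toMat B - (Matrix.trace (toMat B) / 2) • 1 = 0
      · have hA : toMat A = (Matrix.trace (toMat A) / 2) • 1 := by
          rw [← sub_eq_zero]; exact hα
        have hB : toMat B = (Matrix.trace (toMat B) / 2) • 1 := by
          rw [← sub_eq_zero]; exact hβ
        refine ⟨!![1,0;0,-1], by simp [Matrix.trace_fin_two], ?_, ?_, ?_⟩
        · intro h0
          have := congrFun (congrFun h0 0) 0
          simp at this
        · rw [hA]; simp [smul_mul_assoc, mul_smul_comm]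
        · rw [hB]; simp [smul_mul_assoc, mul_smul_comm]
      · refine ⟨toMat B - (Matrix.trace (toMat B) / 2) • 1, ?_, hβ, ?_, ?_⟩
        · simp [Matrix.trace_smul, Matrix.trace_one]
        · simp only [mul_sub, sub_mul, mul_smul_comm, smul_mul_assoc, mul_one, one_mul]
          rw [hab]
        · simp only [mul_sub, sub_mul, mul_smul_comm, smul_mul_assoc, mul_one, one_mul]
    · refine ⟨toMat A - (Matrix.trace (toMat A) / 2) • 1, ?_, hα, ?_, ?_⟩
      · simp [Matrix.trace_smul, Matrix.trace_one]
      · simp only [mul_sub, sub_mul, mul_smul_comm, smul_mul_assoc, mul_one, one_mul]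
      · simp only [mul_sub, sub_mul, mul_smul_comm, smul_mul_assoc, mul_one, one_mul]
        rw [hab]
  have hv11 : v 1 1 = - v 0 0 := by
    simp [Matrix.trace_fin_two] at hvtr; linarith
  -- inverses commute with v as well
  have haa' : toMat A * toMat A⁻¹ = 1 := tm_eq_one (by group)
  have ha'a : toMat A⁻¹ * toMat A = 1 := tm_eq_one (by group)
  have hbb' : toMat B * toMat B⁻¹ = 1 := tm_eq_one (by group)
  have hb'b : toMat B⁻¹ * toMat B = 1 := tm_eq_one (by group)
  have ha'v : toMat A⁻¹ * v = v * toMat A⁻¹ := comm_inv haa' ha'a hva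
  have hb'v : toMat B⁻¹ * v = v * toMat B⁻¹ := comm_inv hbb' hb'b hvb
  have hcv : toMat (A * B * A⁻¹) * v = v * toMat (A * B * A⁻¹) :=
    comm_mul (comm_mul hva hvb) ha'v
  have hdv : toMat (B * A⁻¹ * B⁻¹) * v = v * toMat (B * A⁻¹ * B⁻¹) :=
    comm_mul (comm_mul hvb ha'v) hb'v
  have hcc₂ : toMat (A * B * A⁻¹) * toMat (A * B⁻¹ * A⁻¹) = 1 := tm_eq_one (by group)
  have hc₂c : toMat (A * B⁻¹ * A⁻¹) * toMat (A * B * A⁻¹) = 1 := tm_eq_one (by group)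
  have hdka0 : toMat (B * A⁻¹ * B⁻¹) * (toMat (B * A * B⁻¹ * A⁻¹) * toMat A) = 1 :=
    tm3_eq_one (by group)
  have hkad0 : toMat (B * A * B⁻¹ * A⁻¹) * (toMat A * toMat (B * A⁻¹ * B⁻¹)) = 1 :=
    tm3_eq_one (by group)
  -- apply surjectivity to a suitable Z
  obtain ⟨ξ, η, -, -, hexpr⟩ := hsur !![v 0 0, v 1 0; v 0 1, -(v 0 0)]
    (by simp [Matrix.trace_fin_two])
  have htr := congrArg (fun W => Matrix.trace (W * v)) hexpr
  rw [trace_expr] at htr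
  have hM1 : toMat (A * B * A⁻¹) * (toMat (A * B⁻¹ * A⁻¹) * v)
      - toMat (A * B⁻¹ * A⁻¹) * (v * toMat (A * B * A⁻¹)) = 0 := by
    rw [← mul_assoc, hcc₂, one_mul, ← hcv, ← mul_assoc, hc₂c, one_mul, sub_self]
  have hM2 : toMat (B * A⁻¹ * B⁻¹) * (toMat (B * A * B⁻¹ * A⁻¹) * (v * toMat A))
      - toMat (B * A * B⁻¹ * A⁻¹) * (v * (toMat A * toMat (B * A⁻¹ * B⁻¹))) = 0 := by
    have e1 : toMat (B * A⁻¹ * B⁻¹) * (toMat (B * A * B⁻¹ * A⁻¹) * (v * toMat A)) = v := by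
      rw [← hva]
      calc toMat (B * A⁻¹ * B⁻¹) * (toMat (B * A * B⁻¹ * A⁻¹) * (toMat A * v))
          = (toMat (B * A⁻¹ * B⁻¹) * (toMat (B * A * B⁻¹ * A⁻¹) * toMat A)) * v := by
            simp only [mul_assoc]
        _ = v := by rw [hdka0, one_mul]
    have e2 : toMat (B * A * B⁻¹ * A⁻¹) * (v * (toMat A * toMat (B * A⁻¹ * B⁻¹))) = v := by
      have hadv : (toMat A * toMat (B * A⁻¹ * B⁻¹)) * v
          = v * (toMat A * toMat (B * A⁻¹ * B⁻¹)) := comm_mul hva hdv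
      rw [← hadv]
      calc toMat (B * A * B⁻¹ * A⁻¹) * ((toMat A * toMat (B * A⁻¹ * B⁻¹)) * v)
          = (toMat (B * A * B⁻¹ * A⁻¹) * (toMat A * toMat (B * A⁻¹ * B⁻¹))) * v := by
            simp only [mul_assoc]
        _ = v := by rw [hkad0, one_mul]
    rw [e1, e2, sub_self]
  rw [hM1, hM2] at htr
  simp only [mul_zero, Matrix.trace_zero, add_zero] at htr
  -- htr : 0 = trace (Z * v) with Z = !![v00, v10; v01, -v00]
  have hcomp : Matrix.trace ((!![v 0 0, v 1 0; v 0 1, -(v 0 0)] : M2) * v)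
      = 2 * v 0 0 ^ 2 + v 0 1 ^ 2 + v 1 0 ^ 2 := by
    simp [Matrix.trace_fin_two, Matrix.mul_apply, Fin.sum_univ_two, Matrix.vecMul, dotProduct, hv11]
    ring
  rw [hcomp] at htr
  apply hv0
  have h1 : v 0 0 = 0 := by nlinarith [sq_nonneg (v 0 0), sq_nonneg (v 0 1), sq_nonneg (v 1 0)]
  have h2 : v 0 1 = 0 := by nlinarith [sq_nonneg (v 0 0), sq_nonneg (v 0 1), sq_nonneg (v 1 0)]
  have h3 : v 1 0 = 0 := by nlinarith [sq_nonneg (v 0 0), sq_nonneg (v 0 1), sq_nonneg (v 1 0)]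
  ext i j
  fin_cases i <;> fin_cases j <;> simp [h1, h2, h3, hv11]
lemma forward (A B : SL2) (h : A * B ≠ B * A) (Z : Matrix (Fin 2) (Fin 2) ℝ)
    (hZ : Matrix.trace Z = 0) :
    ∃ ξ η : Matrix (Fin 2) (Fin 2) ℝ, Matrix.trace ξ = 0 ∧ Matrix.trace η = 0 ∧
      (ξ * toMat (A * B * A⁻¹) - toMat (A * B * A⁻¹) * ξ) * toMat (A * B⁻¹ * A⁻¹) +
        toMat A * ((η * toMat (B * A⁻¹ * B⁻¹) - toMat (B * A⁻¹ * B⁻¹) * η) *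
          toMat (B * A * B⁻¹ * A⁻¹)) = Z := by
  classical
  -- matrix-level identities
  have haa' : toMat A * toMat A⁻¹ = 1 := tm_eq_one (by group)
  have ha'a : toMat A⁻¹ * toMat A = 1 := tm_eq_one (by group)
  have hcc₂ : toMat (A * B * A⁻¹) * toMat (A * B⁻¹ * A⁻¹) = 1 := tm_eq_one (by group)
  have hc₂c : toMat (A * B⁻¹ * A⁻¹) * toMat (A * B * A⁻¹) = 1 := tm_eq_one (by group)
  have hdk : toMat (B * A⁻¹ * B⁻¹) * toMat (B * A * B⁻¹ * A⁻¹) = toMat A⁻¹ :=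
    tm_eq (by group)
  have hkr : toMat (B * A * B⁻¹ * A⁻¹) * toMat (A * B * A⁻¹ * B⁻¹) = 1 := tm_eq_one (by group)
  have had : toMat A * toMat (B * A⁻¹ * B⁻¹) = toMat (A * B * A⁻¹ * B⁻¹) := tm_eq (by group)
  have hak : toMat A * toMat (B * A * B⁻¹ * A⁻¹) = toMat (A * B * A * B⁻¹ * A⁻¹) :=
    tm_eq (by group)
  have hra' : toMat (A * B * A⁻¹ * B⁻¹) * toMat A⁻¹ = toMat (A * B * A⁻¹ * B⁻¹ * A⁻¹) :=
    tm_eq (by group)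
  have hXX' : toMat (A * B * A⁻¹ * B⁻¹ * A⁻¹) * toMat (A * B * A * B⁻¹ * A⁻¹) = 1 :=
    tm_eq_one (by group)
  have hX'X : toMat (A * B * A * B⁻¹ * A⁻¹) * toMat (A * B * A⁻¹ * B⁻¹ * A⁻¹) = 1 :=
    tm_eq_one (by group)
  have hX'c : toMat (A * B * A * B⁻¹ * A⁻¹) * toMat (A * B * A⁻¹) = toMat (A * B) :=
    tm_eq (by group)
  have hc₂P : toMat (A * B⁻¹ * A⁻¹) * toMat (A * B) = toMat A := tm_eq (by group)
  have ha'P : toMat A⁻¹ * toMat (A * B) = toMat B := tm_eq (by group)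
  set T := Phi (toMat A) (toMat (A * B * A⁻¹)) (toMat (A * B⁻¹ * A⁻¹))
    (toMat (B * A⁻¹ * B⁻¹)) (toMat (B * A * B⁻¹ * A⁻¹)) with hT
  have hU : LinearMap.range T ⊔ (ℝ ∙ (1 : M2)) = ⊤ := by
    by_contra hne
    obtain ⟨f, hf0, hfmap⟩ := Submodule.exists_dual_map_eq_bot_of_lt_top
      (lt_top_iff_ne_top.mpr hne) inferInstance
    have hfU : ∀ x ∈ (LinearMap.range T ⊔ (ℝ ∙ (1 : M2))), f x = 0 := fun x hx => by
      have hmem : f x ∈ Submodule.map f (LinearMap.range T ⊔ (ℝ ∙ (1 : M2))) :=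
        Submodule.mem_map_of_mem hx
      rwa [hfmap, Submodule.mem_bot] at hmem
    set v : M2 := !![f !![1,0;0,0], f !![0,0;1,0]; f !![0,1;0,0], f !![0,0;0,1]] with hv
    have hpair : ∀ X : M2, Matrix.trace (X * v) = f X := fun X => pairing f X
    have hvtr : Matrix.trace v = 0 := by
      have h1 : Matrix.trace ((1 : M2) * v) = f 1 := hpair 1
      rw [one_mul] at h1
      rw [h1]
      exact hfU 1 (Submodule.mem_sup_right (Submodule.mem_span_singleton_self 1))
    have hTv' : ∀ ξ η : M2,
        Matrix.trace (ξ * (toMat (A * B * A⁻¹) * (toMat (A * B⁻¹ * A⁻¹) * v)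
            - toMat (A * B⁻¹ * A⁻¹) * (v * toMat (A * B * A⁻¹))))
          + Matrix.trace (η * (toMat (B * A⁻¹ * B⁻¹) * (toMat (B * A * B⁻¹ * A⁻¹) * (v * toMat A))
            - toMat (B * A * B⁻¹ * A⁻¹) * (v * (toMat A * toMat (B * A⁻¹ * B⁻¹))))) = 0 := by
      intro ξ η
      have h0 : Matrix.trace (T (ξ, η) * v) = 0 := by
        rw [hpair]
        exact hfU _ (Submodule.mem_sup_left (LinearMap.mem_range_self _ _))
      rw [hT, Phi_apply, trace_expr] at h0
      exact h0
    have hM1 : toMat (A * B * A⁻¹) * (toMat (A * B⁻¹ * A⁻¹) * v)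
        - toMat (A * B⁻¹ * A⁻¹) * (v * toMat (A * B * A⁻¹)) = 0 := by
      apply eq_zero_of_forall_trace
      intro ξ
      have := hTv' ξ 0
      simpa using this
    have hM2 : toMat (B * A⁻¹ * B⁻¹) * (toMat (B * A * B⁻¹ * A⁻¹) * (v * toMat A))
        - toMat (B * A * B⁻¹ * A⁻¹) * (v * (toMat A * toMat (B * A⁻¹ * B⁻¹))) = 0 := by
      apply eq_zero_of_forall_trace
      intro η
      have := hTv' 0 η
      simpa using this
    have hcv : toMat (A * B * A⁻¹) * v = v * toMat (A * B * A⁻¹) := by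
      have h1 : toMat (A * B * A⁻¹) * (toMat (A * B⁻¹ * A⁻¹) * v)
          = toMat (A * B⁻¹ * A⁻¹) * (v * toMat (A * B * A⁻¹)) := sub_eq_zero.mp hM1
      rw [← mul_assoc, hcc₂, one_mul] at h1
      calc toMat (A * B * A⁻¹) * v
          = toMat (A * B * A⁻¹) * (toMat (A * B⁻¹ * A⁻¹) * (v * toMat (A * B * A⁻¹))) := by
            rw [← h1]
        _ = (toMat (A * B * A⁻¹) * toMat (A * B⁻¹ * A⁻¹)) * (v * toMat (A * B * A⁻¹)) :=
            (mul_assoc _ _ _).symm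
        _ = v * toMat (A * B * A⁻¹) := by rw [hcc₂, one_mul]
    have hE : toMat A⁻¹ * (v * toMat A)
        = toMat (B * A * B⁻¹ * A⁻¹) * (v * toMat (A * B * A⁻¹ * B⁻¹)) := by
      have h1 : toMat (B * A⁻¹ * B⁻¹) * (toMat (B * A * B⁻¹ * A⁻¹) * (v * toMat A))
          = toMat (B * A * B⁻¹ * A⁻¹) * (v * (toMat A * toMat (B * A⁻¹ * B⁻¹))) :=
        sub_eq_zero.mp hM2
      rw [← mul_assoc, hdk, had] at h1
      exact h1
    have hE1 : v * toMat A = toMat (A * B * A * B⁻¹ * A⁻¹) * (v * toMat (A * B * A⁻¹ * B⁻¹)) := by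
      calc v * toMat A = (toMat A * toMat A⁻¹) * (v * toMat A) := by rw [haa', one_mul]
        _ = toMat A * (toMat A⁻¹ * (v * toMat A)) := mul_assoc _ _ _
        _ = toMat A * (toMat (B * A * B⁻¹ * A⁻¹) * (v * toMat (A * B * A⁻¹ * B⁻¹))) := by
            rw [hE]
        _ = (toMat A * toMat (B * A * B⁻¹ * A⁻¹)) * (v * toMat (A * B * A⁻¹ * B⁻¹)) :=
            (mul_assoc _ _ _).symm
        _ = toMat (A * B * A * B⁻¹ * A⁻¹) * (v * toMat (A * B * A⁻¹ * B⁻¹)) := by rw [hak]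
    have hXv : toMat (A * B * A⁻¹ * B⁻¹ * A⁻¹) * v = v * toMat (A * B * A⁻¹ * B⁻¹ * A⁻¹) := by
      have h2 : toMat (A * B * A * B⁻¹ * A⁻¹) * (v * toMat (A * B * A⁻¹ * B⁻¹ * A⁻¹)) = v := by
        calc toMat (A * B * A * B⁻¹ * A⁻¹) * (v * toMat (A * B * A⁻¹ * B⁻¹ * A⁻¹))
            = toMat (A * B * A * B⁻¹ * A⁻¹) * (v * (toMat (A * B * A⁻¹ * B⁻¹) * toMat A⁻¹)) := by
              rw [hra']
          _ = toMat (A * B * A * B⁻¹ * A⁻¹) * ((v * toMat (A * B * A⁻¹ * B⁻¹)) * toMat A⁻¹) := by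
              rw [← mul_assoc v (toMat (A * B * A⁻¹ * B⁻¹)) (toMat A⁻¹)]
          _ = (toMat (A * B * A * B⁻¹ * A⁻¹) * (v * toMat (A * B * A⁻¹ * B⁻¹))) * toMat A⁻¹ :=
              (mul_assoc _ _ _).symm
          _ = (v * toMat A) * toMat A⁻¹ := by rw [← hE1]
          _ = v * (toMat A * toMat A⁻¹) := mul_assoc _ _ _
          _ = v := by rw [haa', mul_one]
      calc toMat (A * B * A⁻¹ * B⁻¹ * A⁻¹) * v
          = toMat (A * B * A⁻¹ * B⁻¹ * A⁻¹)
              * (toMat (A * B * A * B⁻¹ * A⁻¹) * (v * toMat (A * B * A⁻¹ * B⁻¹ * A⁻¹))) := by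
            rw [h2]
        _ = (toMat (A * B * A⁻¹ * B⁻¹ * A⁻¹) * toMat (A * B * A * B⁻¹ * A⁻¹))
              * (v * toMat (A * B * A⁻¹ * B⁻¹ * A⁻¹)) := (mul_assoc _ _ _).symm
        _ = v * toMat (A * B * A⁻¹ * B⁻¹ * A⁻¹) := by rw [hXX', one_mul]
    have hX'v : toMat (A * B * A * B⁻¹ * A⁻¹) * v = v * toMat (A * B * A * B⁻¹ * A⁻¹) :=
      comm_inv hXX' hX'X hXv
    have hPv : toMat (A * B) * v = v * toMat (A * B) := by
      rw [← hX'c]; exact comm_mul hX'v hcv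
    have hc₂v : toMat (A * B⁻¹ * A⁻¹) * v = v * toMat (A * B⁻¹ * A⁻¹) :=
      comm_inv hcc₂ hc₂c hcv
    have hav : toMat A * v = v * toMat A := by
      rw [← hc₂P]; exact comm_mul hc₂v hPv
    have ha'v : toMat A⁻¹ * v = v * toMat A⁻¹ := comm_inv haa' ha'a hav
    have hbv : toMat B * v = v * toMat B := by
      rw [← ha'P]; exact comm_mul ha'v hPv
    have hveq : v = 0 := by
      by_contra hv0
      exact h (tm_inj (commutant hvtr hv0 hav hbv))
    apply hf0
    refine LinearMap.ext fun X => ?_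
    rw [LinearMap.zero_apply, ← hpair X, hveq, mul_zero, Matrix.trace_zero]
  have hZU : Z ∈ LinearMap.range T ⊔ (ℝ ∙ (1 : M2)) := by rw [hU]; exact Submodule.mem_top
  rw [Submodule.mem_sup] at hZU
  obtain ⟨y, hy, z, hz, hyz⟩ := hZU
  obtain ⟨⟨ξ₀, η₀⟩, rfl⟩ := hy
  obtain ⟨s, rfl⟩ := Submodule.mem_span_singleton.mp hz
  have htr : Matrix.trace (T (ξ₀, η₀)) = 0 := by
    have h1 := trace_expr (toMat A) (toMat (A * B * A⁻¹)) (toMat (A * B⁻¹ * A⁻¹))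
      (toMat (B * A⁻¹ * B⁻¹)) (toMat (B * A * B⁻¹ * A⁻¹)) 1 ξ₀ η₀
    rw [mul_one] at h1
    rw [hT, Phi_apply, h1]
    simp only [mul_one, one_mul]
    rw [hcc₂, hc₂c, ← mul_assoc (toMat (B * A⁻¹ * B⁻¹)) (toMat (B * A * B⁻¹ * A⁻¹)) (toMat A),
      hdk, ha'a, had, hkr]
    simp
  have hs : s = 0 := by
    have h2 := hZ
    rw [← hyz, Matrix.trace_add, htr, Matrix.trace_smul, Matrix.trace_one] at h2
    simp at h2
    linarith
  refine ⟨ξ₀ - (Matrix.trace ξ₀ / 2) • 1, η₀ - (Matrix.trace η₀ / 2) • 1, ?_, ?_, ?_⟩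
  · simp [Matrix.trace_smul, Matrix.trace_one]
  · simp [Matrix.trace_smul, Matrix.trace_one]
  · have e1 : (ξ₀ - (Matrix.trace ξ₀ / 2) • 1) * toMat (A * B * A⁻¹)
        - toMat (A * B * A⁻¹) * (ξ₀ - (Matrix.trace ξ₀ / 2) • 1)
        = ξ₀ * toMat (A * B * A⁻¹) - toMat (A * B * A⁻¹) * ξ₀ := by
      simp only [sub_mul, mul_sub, smul_mul_assoc, mul_smul_comm, one_mul, mul_one]
      abel
    have e2 : (η₀ - (Matrix.trace η₀ / 2) • 1) * toMat (B * A⁻¹ * B⁻¹)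
        - toMat (B * A⁻¹ * B⁻¹) * (η₀ - (Matrix.trace η₀ / 2) • 1)
        = η₀ * toMat (B * A⁻¹ * B⁻¹) - toMat (B * A⁻¹ * B⁻¹) * η₀ := by
      simp only [sub_mul, mul_sub, smul_mul_assoc, mul_smul_comm, one_mul, mul_one]
      abel
    rw [e1, e2]
    calc (ξ₀ * toMat (A * B * A⁻¹) - toMat (A * B * A⁻¹) * ξ₀) * toMat (A * B⁻¹ * A⁻¹) +
        toMat A * ((η₀ * toMat (B * A⁻¹ * B⁻¹) - toMat (B * A⁻¹ * B⁻¹) * η₀) *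
          toMat (B * A * B⁻¹ * A⁻¹))
        = T (ξ₀, η₀) := by rw [hT, Phi_apply]
      _ = T (ξ₀, η₀) + s • 1 := by rw [hs, zero_smul, add_zero]
      _ = Z := hyz

/-- A·B ≠ B·A iff the differential of the commutator map R(A,B) = A·B·A⁻¹·B⁻¹ is
surjective at (A,B): every traceless Z is of the form
[ξ, ABA⁻¹]·(AB⁻¹A⁻¹) + A·[η, BA⁻¹B⁻¹]·(BAB⁻¹A⁻¹) with ξ, η traceless. -/
theorem stmt16 (A B : SL2) :
    A * B ≠ B * A ↔
      ∀ Z : Matrix (Fin 2) (Fin 2) ℝ, Matrix.trace Z = 0 →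
        ∃ ξ η : Matrix (Fin 2) (Fin 2) ℝ, Matrix.trace ξ = 0 ∧ Matrix.trace η = 0 ∧
          (ξ * toMat (A * B * A⁻¹) - toMat (A * B * A⁻¹) * ξ) * toMat (A * B⁻¹ * A⁻¹) +
            toMat A * ((η * toMat (B * A⁻¹ * B⁻¹) - toMat (B * A⁻¹ * B⁻¹) * η) *
              toMat (B * A * B⁻¹ * A⁻¹)) = Z := by
  constructor
  · intro h Z hZ
    exact forward A B h Z hZ
  · intro hsur hAB
    exact backward A B hAB hsur
end

section
/- Let A, B ∈ SL(2,ℝ) be parabolic, i.e., tr A ∈ {2,−2}, A ∉ {I,−I}, tr B ∈ {2,−2}, B ∉ {I,−I}. The following are equivalent: (a) A·B ≠ B·A; (b) for every 2×2 real matrix Z with tr Z = 0 there exist 2×2 real matrices ξ, η with tr ξ = 0, tr η = 0, tr(ξ·A) = 0, and tr(η·B) = 0, such that ξ + A·η·A⁻¹ = Z. (This says the differential of the product map m(A,B) = A·B restricted to Par × Par is surjective at (A,B) exactly when A and B do not commute, where the tangent space of the set Par of parabolic matrices at X is {ξ·X : tr ξ = 0 and tr(ξ·X) = 0}.) -/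
open Matrix

instance : Fact (Even (Fintype.card (Fin 2))) := ⟨by rw [Fintype.card_fin]; exact even_two⟩

lemma trace_mul_eq' (ξ M : Matrix (Fin 2) (Fin 2) ℝ) (h : Matrix.trace ξ = 0) :
    Matrix.trace (ξ * M) = ξ 0 0 * (M 0 0 - M 1 1) + ξ 0 1 * M 1 0 + ξ 1 0 * M 0 1 := by
  simp [Matrix.trace_fin_two, Matrix.mul_apply, Fin.sum_univ_two] at h ⊢
  linear_combination M 1 1 * h

lemma mul_comm_of_cross' (M G : Matrix (Fin 2) (Fin 2) ℝ)
    (h1 : M 0 1 * G 1 0 - M 1 0 * G 0 1 = 0)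
    (h2 : G 0 1 * (M 0 0 - M 1 1) - M 0 1 * (G 0 0 - G 1 1) = 0)
    (h3 : M 1 0 * (G 0 0 - G 1 1) - G 1 0 * (M 0 0 - M 1 1) = 0) :
    M * G = G * M := by
  ext i j
  fin_cases i <;> fin_cases j <;> simp [Matrix.mul_apply, Fin.sum_univ_two] <;> linarith

lemma solve3' (u1 u2 u3 w1 w2 w3 T : ℝ)
    (h : ¬(u1*w2 - u2*w1 = 0 ∧ u1*w3 - u3*w1 = 0 ∧ u2*w3 - u3*w2 = 0)) :
    ∃ f x y : ℝ, f*u1 + x*u2 + y*u3 = 0 ∧ f*w1 + x*w2 + y*w3 = T := by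
  set uu := u1^2+u2^2+u3^2 with huu
  set ww := w1^2+w2^2+w3^2 with hww
  set uw := u1*w1+u2*w2+u3*w3 with huw
  have hlag : uu*ww - uw^2 = (u1*w2 - u2*w1)^2 + (u1*w3 - u3*w1)^2 + (u2*w3 - u3*w2)^2 := by
    rw [huu, hww, huw]; ring
  have hD : uu*ww - uw^2 ≠ 0 := by
    push_neg at h
    rcases eq_or_ne (u1*w2 - u2*w1) 0 with h1 | h1
    · rcases eq_or_ne (u1*w3 - u3*w1) 0 with h2 | h2
      · have h3 := h h1 h2
        rw [hlag]; positivity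
      · rw [hlag]; positivity
    · rw [hlag]; positivity
  refine ⟨T/(uu*ww - uw^2)*(uu*w1 - uw*u1), T/(uu*ww - uw^2)*(uu*w2 - uw*u2),
    T/(uu*ww - uw^2)*(uu*w3 - uw*u3), ?_, ?_⟩
  · field_simp
    rw [huu, huw]; ring
  · field_simp
    rw [huu, huw, hww]; ring

set_option maxHeartbeats 1600000 in
/-- For parabolic A, B ∈ SL(2,ℝ): A·B ≠ B·A iff the differential of the product map
restricted to Par × Par is surjective at (A,B): every traceless Z equals ξ + A·η·A⁻¹ with
tr ξ = tr η = 0, tr(ξ·A) = 0 and tr(η·B) = 0. -/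
theorem stmt17 (A B : SL2)
    (hA : (trSL A = 2 ∨ trSL A = -2) ∧ A ≠ 1 ∧ A ≠ -1)
    (hB : (trSL B = 2 ∨ trSL B = -2) ∧ B ≠ 1 ∧ B ≠ -1) :
    A * B ≠ B * A ↔
      ∀ Z : Matrix (Fin 2) (Fin 2) ℝ, Matrix.trace Z = 0 →
        ∃ ξ η : Matrix (Fin 2) (Fin 2) ℝ,
          Matrix.trace ξ = 0 ∧ Matrix.trace η = 0 ∧
          Matrix.trace (ξ * toMat A) = 0 ∧ Matrix.trace (η * toMat B) = 0 ∧
          ξ + toMat A * η * toMat (A⁻¹) = Z := by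
  obtain ⟨-, hA1, hA2⟩ := hA
  obtain ⟨-, hB1, hB2⟩ := hB
  have hMA : toMat A = (A : Matrix (Fin 2) (Fin 2) ℝ) := rfl
  have hMB : toMat B = (B : Matrix (Fin 2) (Fin 2) ℝ) := rfl
  set MA : Matrix (Fin 2) (Fin 2) ℝ := (A : Matrix (Fin 2) (Fin 2) ℝ) with hMA'
  set MB : Matrix (Fin 2) (Fin 2) ℝ := (B : Matrix (Fin 2) (Fin 2) ℝ) with hMB'
  have hdetA : MA.det = 1 := A.2
  have hdetB : MB.det = 1 := B.2
  have hinv : toMat (A⁻¹) = adjugate MA := Matrix.SpecialLinearGroup.coe_inv A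
  have hadj1 : MA * adjugate MA = 1 := by rw [Matrix.mul_adjugate, hdetA, one_smul]
  have hadj2 : adjugate MA * MA = 1 := by rw [Matrix.adjugate_mul, hdetA, one_smul]
  constructor
  · -- noncommuting ⇒ surjective
    intro hne Z hZ
    set G : Matrix (Fin 2) (Fin 2) ℝ := MA * MB * adjugate MA with hG
    have hGmat : ((A * B * A⁻¹ : SL2) : Matrix (Fin 2) (Fin 2) ℝ) = G := by
      simp [hG, Matrix.SpecialLinearGroup.coe_inv]
      rfl
    have hcross : ¬((MA 0 0 - MA 1 1) * G 1 0 - MA 1 0 * (G 0 0 - G 1 1) = 0 ∧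
        (MA 0 0 - MA 1 1) * G 0 1 - MA 0 1 * (G 0 0 - G 1 1) = 0 ∧
        MA 1 0 * G 0 1 - MA 0 1 * G 1 0 = 0) := by
      rintro ⟨h1, h2, h3⟩
      have hMG : MA * G = G * MA := by
        apply mul_comm_of_cross' <;> linarith
      have hSL : A * (A * B * A⁻¹) = (A * B * A⁻¹) * A := by
        apply Subtype.ext
        show ((A * (A * B * A⁻¹) : SL2) : Matrix (Fin 2) (Fin 2) ℝ)
            = ((A * B * A⁻¹ * A : SL2) : Matrix (Fin 2) (Fin 2) ℝ)
        simp only [Matrix.SpecialLinearGroup.coe_mul, Matrix.SpecialLinearGroup.coe_inv]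
        exact hMG
      have h2' : A * B * A⁻¹ * A = A * B := by
        rw [mul_assoc]; simp
      rw [h2'] at hSL
      have h3' : A * B * A⁻¹ = B := mul_left_cancel hSL
      apply hne
      calc A * B = (A * B * A⁻¹) * A := h2'.symm
        _ = B * A := by rw [h3']
    obtain ⟨f, x, y, hu, hw⟩ := solve3' (MA 0 0 - MA 1 1) (MA 1 0) (MA 0 1)
      (G 0 0 - G 1 1) (G 1 0) (G 0 1)
      (Z 0 0 * (G 0 0 - G 1 1) + Z 0 1 * G 1 0 + Z 1 0 * G 0 1) hcross
    set ξ : Matrix (Fin 2) (Fin 2) ℝ := !![f, x; y, -f] with hξ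
    set ζ : Matrix (Fin 2) (Fin 2) ℝ := Z - ξ with hζ
    refine ⟨ξ, adjugate MA * ζ * MA, ?_, ?_, ?_, ?_, ?_⟩
    · simp [hξ, Matrix.trace_fin_two]
    · have h5 : Matrix.trace (adjugate MA * ζ * MA) = Matrix.trace ζ := by
        rw [Matrix.trace_mul_comm, ← mul_assoc, hadj1, one_mul]
      rw [h5, hζ]
      simp [Matrix.trace_sub, hZ, hξ, Matrix.trace_fin_two]
    · rw [hMA, trace_mul_eq' _ _ (by simp [hξ, Matrix.trace_fin_two])]
      simpa [hξ] using hu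
    · have htr : Matrix.trace (adjugate MA * ζ * MA * toMat B) = Matrix.trace (ζ * G) := by
        rw [hMB, hG]
        rw [show adjugate MA * ζ * MA * MB = adjugate MA * (ζ * (MA * MB)) from by
          simp only [mul_assoc]]
        rw [Matrix.trace_mul_comm]
        simp only [mul_assoc]
      rw [htr]
      have hζtr : Matrix.trace ζ = 0 := by
        rw [hζ]; simp [Matrix.trace_sub, hZ, hξ, Matrix.trace_fin_two]
      rw [trace_mul_eq' _ _ hζtr]
      have e0 : ζ 0 0 = Z 0 0 - f := by simp [hζ, hξ]
      have e1 : ζ 0 1 = Z 0 1 - x := by simp [hζ, hξ]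
      have e2 : ζ 1 0 = Z 1 0 - y := by simp [hζ, hξ]
      rw [e0, e1, e2]
      linarith [hw]
    · rw [hinv, hMA]
      rw [show MA * (adjugate MA * ζ * MA) * adjugate MA
          = (MA * adjugate MA) * ζ * (MA * adjugate MA) from by simp only [mul_assoc]]
      rw [hadj1, one_mul, mul_one, hζ]
      abel
  · -- surjective ⇒ noncommuting
    intro hsurj hc
    have hcm : MA * MB = MB * MA := by
      have := congrArg (fun X : SL2 => (X : Matrix (Fin 2) (Fin 2) ℝ)) hc
      simpa using this
    set Z : Matrix (Fin 2) (Fin 2) ℝ :=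
      !![MA 0 0 - MA 1 1, 2 * MA 1 0; 2 * MA 0 1, MA 1 1 - MA 0 0] with hZdef
    have hZtr : Matrix.trace Z = 0 := by
      simp [hZdef, Matrix.trace_fin_two]
    obtain ⟨ξ, η, hξtr, hηtr, hξA, hηB, hsum⟩ := hsurj Z hZtr
    rw [hMA, hinv] at hsum
    rw [hMA] at hξA
    rw [hMB] at hηB
    have hTZ : Matrix.trace (Z * MA) = Matrix.trace (η * MA) := by
      rw [← hsum, add_mul, Matrix.trace_add]
      rw [show MA * η * adjugate MA * MA = MA * η * (adjugate MA * MA) from by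
        rw [mul_assoc], hadj2, mul_one, hξA, zero_add, Matrix.trace_mul_comm]
    have hdB : MB 0 0 * MB 1 1 - MB 0 1 * MB 1 0 = 1 := by
      rw [← Matrix.det_fin_two]; exact hdetB
    have hdA : MA 0 0 * MA 1 1 - MA 0 1 * MA 1 0 = 1 := by
      rw [← Matrix.det_fin_two]; exact hdetA
    have hcm' := Matrix.ext_iff.mpr hcm
    have h00 := hcm' 0 0
    have h01 := hcm' 0 1
    have h10 := hcm' 1 0
    simp only [Matrix.mul_apply, Fin.sum_univ_two] at h00 h01 h10
    have hTB0 : η 0 0 * (MB 0 0 - MB 1 1) + η 0 1 * MB 1 0 + η 1 0 * MB 0 1 = 0 := by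
      rw [← trace_mul_eq' η MB hηtr]; exact hηB
    set TA : ℝ := η 0 0 * (MA 0 0 - MA 1 1) + η 0 1 * MA 1 0 + η 1 0 * MA 0 1 with hTA
    have e1 : (MB 0 0 - MB 1 1) * TA = 0 := by
      rw [hTA]; linear_combination (MA 0 0 - MA 1 1) * hTB0 + η 0 1 * h10 - η 1 0 * h01
    have e2 : MB 0 1 * TA = 0 := by
      rw [hTA]; linear_combination MA 0 1 * hTB0 + η 0 0 * h01 - η 0 1 * h00
    have e3 : MB 1 0 * TA = 0 := by
      rw [hTA]; linear_combination MA 1 0 * hTB0 - η 0 0 * h10 + η 1 0 * h00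
    have hBn : ¬(MB 0 0 - MB 1 1 = 0 ∧ MB 0 1 = 0 ∧ MB 1 0 = 0) := by
      rintro ⟨f1, f2, f3⟩
      have h11 : MB 1 1 = MB 0 0 := by linarith
      have hsq : MB 0 0 * MB 0 0 = 1 := by
        rw [f2, f3] at hdB; rw [h11] at hdB; linarith
      rcases mul_self_eq_one_iff.mp hsq with h1 | h1
      · apply hB1
        apply Subtype.ext
        show MB = ((1 : SL2) : Matrix (Fin 2) (Fin 2) ℝ)
        ext i j
        fin_cases i <;> fin_cases j <;>
          simp [Matrix.one_apply, h1, f2, f3, h11]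
      · apply hB2
        apply Subtype.ext
        show MB = ((-1 : SL2) : Matrix (Fin 2) (Fin 2) ℝ)
        ext i j
        fin_cases i <;> fin_cases j <;>
          simp [Matrix.one_apply, h1, f2, f3, h11]
    have hTA0 : TA = 0 := by
      by_contra hT
      apply hBn
      refine ⟨?_, ?_, ?_⟩
      · rcases mul_eq_zero.mp e1 with h | h
        · exact h
        · exact absurd h hT
      · rcases mul_eq_zero.mp e2 with h | h
        · exact h
        · exact absurd h hT
      · rcases mul_eq_zero.mp e3 with h | h
        · exact h
        · exact absurd h hT
    have hZA : Matrix.trace (Z * MA) =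
        (MA 0 0 - MA 1 1)^2 + 2 * MA 1 0^2 + 2 * MA 0 1^2 := by
      rw [trace_mul_eq' Z MA hZtr]
      have z0 : Z 0 0 = MA 0 0 - MA 1 1 := by simp [hZdef]
      have z1 : Z 0 1 = 2 * MA 1 0 := by simp [hZdef]
      have z2 : Z 1 0 = 2 * MA 0 1 := by simp [hZdef]
      rw [z0, z1, z2]; ring
    have hηA : Matrix.trace (η * MA) = TA := trace_mul_eq' η MA hηtr
    have hzero : (MA 0 0 - MA 1 1)^2 + 2 * MA 1 0^2 + 2 * MA 0 1^2 = 0 := by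
      rw [← hZA, hTZ, hηA, hTA0]
    have f1 : MA 0 0 - MA 1 1 = 0 := by nlinarith [sq_nonneg (MA 0 0 - MA 1 1), sq_nonneg (MA 1 0), sq_nonneg (MA 0 1)]
    have f2 : MA 0 1 = 0 := by nlinarith [sq_nonneg (MA 0 0 - MA 1 1), sq_nonneg (MA 1 0), sq_nonneg (MA 0 1)]
    have f3 : MA 1 0 = 0 := by nlinarith [sq_nonneg (MA 0 0 - MA 1 1), sq_nonneg (MA 1 0), sq_nonneg (MA 0 1)]
    have h11 : MA 1 1 = MA 0 0 := by linarith
    have hsq : MA 0 0 * MA 0 0 = 1 := by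
      rw [f2, f3] at hdA; rw [h11] at hdA; linarith
    rcases mul_self_eq_one_iff.mp hsq with h1 | h1
    · apply hA1
      apply Subtype.ext
      show MA = ((1 : SL2) : Matrix (Fin 2) (Fin 2) ℝ)
      ext i j
      fin_cases i <;> fin_cases j <;>
        simp [Matrix.one_apply, h1, f2, f3, h11]
    · apply hA2
      apply Subtype.ext
      show MA = ((-1 : SL2) : Matrix (Fin 2) (Fin 2) ℝ)
      ext i j
      fin_cases i <;> fin_cases j <;>
        simp [Matrix.one_apply, h1, f2, f3, h11]
end

section
/- Let s ∈ {1,−1} and let A : [0,1] → SL(2,ℝ) be a continuous path such that for every t ∈ [0,1], A(t) is SL(2,ℝ)-conjugate to U_s. Then there exists a continuous path g : [0,1] → SL(2,ℝ) with g(0) = I such that A(t) = g(t)·A(0)·g(t)⁻¹ for all t ∈ [0,1]. -/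
open Matrix
open Complex Set

/-- The standard (matrix) topology on `SL(2,ℝ)`, as a subspace of the 2×2 real matrices. -/
instance : TopologicalSpace SL2 := instTopologicalSpaceSubtype

/-- For `s ∈ {1,−1}`, `U_s` is the matrix `[[1, s],[0, 1]] ∈ SL(2,ℝ)`. -/
def Umat (s : ℝ) : SL2 := ⟨!![1, s; 0, 1], by rw [Matrix.det_fin_two_of]; ring⟩

/-- `A` is `SL(2,ℝ)`-conjugate to `B`, i.e. `A = P·B·P⁻¹` for some `P ∈ SL(2,ℝ)`. -/
def IsConjTo (A B : SL2) : Prop := ∃ P : SL2, A = P * B * P⁻¹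

/-- Continuous logarithm lift along a nonvanishing path on the unit interval. -/
lemma exists_exp_lift (f : unitInterval → ℂ) (hf : Continuous f) (h0 : ∀ t, f t ≠ 0) :
    ∃ L : unitInterval → ℂ, Continuous L ∧ ∀ t, Complex.exp (L t) = f t := by
  classical
  set F : ℝ → ℂ := fun x => f (projIcc 0 1 zero_le_one x) with hF
  have hFc : Continuous F := hf.comp (continuous_projIcc)
  have hF0 : ∀ x, F x ≠ 0 := fun x => h0 _
  obtain ⟨t0, -, ht0⟩ := isCompact_univ.exists_isMinOn (Set.univ_nonempty)
    ((continuous_norm.comp hf).continuousOn)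
  set m : ℝ := ‖f t0‖ with hm
  have hm0 : 0 < m := norm_pos_iff.mpr (h0 t0)
  have hmle : ∀ x, m ≤ ‖F x‖ := fun x => ht0 (mem_univ _)
  have hfu : UniformContinuous f := CompactSpace.uniformContinuous_of_continuous hf
  obtain ⟨δ, hδ0, hδ⟩ := Metric.uniformContinuous_iff.mp hfu m hm0
  have hFu : ∀ x y : ℝ, |x - y| < δ → ‖F x - F y‖ < m := by
    intro x y hxy
    have hd : dist (projIcc 0 1 zero_le_one x) (projIcc 0 1 zero_le_one y) < δ := by
      rw [Subtype.dist_eq, Real.dist_eq]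
      exact lt_of_le_of_lt (Set.abs_projIcc_sub_projIcc _) hxy
    simpa [hF, dist_eq_norm] using hδ hd
  obtain ⟨n, hn1, hnδ⟩ : ∃ n : ℕ, 1 ≤ n ∧ (1:ℝ)/n < δ := by
    obtain ⟨n, hn⟩ := exists_nat_one_div_lt hδ0
    refine ⟨n+1, le_add_self, by exact_mod_cast hn⟩
  have hnpos : (0:ℝ) < n := by exact_mod_cast hn1
  have key : ∀ k : ℕ, ∃ L : ℝ → ℂ, Continuous L ∧ ∀ x ≤ (k:ℝ)/n, Complex.exp (L x) = F x := by
    intro k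
    induction k with
    | zero =>
      refine ⟨fun _ => Complex.log (F 0), continuous_const, ?_⟩
      intro x hx
      have hx0 : x ≤ 0 := by simpa using hx
      have : F x = F 0 := by
        simp only [hF]
        congr 1
        rw [projIcc_of_le_left _ hx0, projIcc_of_le_left _ le_rfl]
      rw [this, Complex.exp_log (hF0 0)]
    | succ k ih =>
      obtain ⟨L, hLc, hL⟩ := ih
      set a : ℝ := (k:ℝ)/n with ha
      set b : ℝ := ((k:ℝ)+1)/n with hb
      have hab : a ≤ b := (div_le_div_iff_of_pos_right hnpos).mpr (by linarith)
      have hba : b - a = 1/n := by rw [ha, hb]; ring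
      set q : ℝ → ℂ := fun x => F (min x b) / F (min x a) with hq
      have hqnear : ∀ x, ‖q x - 1‖ < 1 := by
        intro x
        have h2 : |min x b - min x a| ≤ b - a := by
          rcases le_total x a with h | h
          · rw [min_eq_left h, min_eq_left (h.trans hab), sub_self, abs_zero]; linarith
          · rw [min_eq_right h]
            rcases le_total x b with h' | h'
            · rw [min_eq_left h', _root_.abs_of_nonneg (by linarith)]; linarith
            · rw [min_eq_right h', _root_.abs_of_nonneg (by linarith)]
        have h1 : ‖F (min x b) - F (min x a)‖ < m := by
          apply hFu
          calc |min x b - min x a| ≤ b - a := h2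
            _ = 1/n := hba
            _ < δ := hnδ
        have h3 : q x - 1 = (F (min x b) - F (min x a)) / F (min x a) := by
          rw [hq]; rw [div_sub_one (hF0 _)]
        rw [h3, norm_div]
        calc ‖F (min x b) - F (min x a)‖ / ‖F (min x a)‖
            ≤ ‖F (min x b) - F (min x a)‖ / m := by gcongr; exact hmle _
          _ < m / m := by gcongr
          _ = 1 := div_self (ne_of_gt hm0)
      have hqslit : ∀ x, q x ∈ Complex.slitPlane := by
        intro x
        rw [Complex.mem_slitPlane_iff]
        left
        have h1 : |(q x).re - 1| ≤ ‖q x - 1‖ := by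
          have := Complex.abs_re_le_norm (q x - 1)
          simpa using this
        have h4 := abs_lt.mp (lt_of_le_of_lt h1 (hqnear x))
        linarith [h4.1]
      have hqc : Continuous q :=
        (hFc.comp (continuous_id.min continuous_const)).div
          (hFc.comp (continuous_id.min continuous_const)) (fun x => hF0 _)
      have hlogc : Continuous fun x => Complex.log (q x) := by
        rw [continuous_iff_continuousAt]
        intro x
        exact (continuousAt_clog (hqslit x)).comp hqc.continuousAt
      refine ⟨fun x => L (min x a) + Complex.log (q x),
        (hLc.comp (continuous_id.min continuous_const)).add hlogc, ?_⟩
      intro x hx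
      have hx' : x ≤ b := by rw [hb]; push_cast at hx; convert hx using 2
      rw [Complex.exp_add, Complex.exp_log (div_ne_zero (hF0 _) (hF0 _))]
      have hLmin : Complex.exp (L (min x a)) = F (min x a) := hL _ (min_le_right _ _)
      rcases le_total x a with hxa | hax
      · rw [min_eq_left hxa] at hLmin ⊢
        rw [min_eq_left (hxa.trans hab), div_self (hF0 x), mul_one]
        exact hLmin
      · rw [min_eq_right hax] at hLmin ⊢
        rw [min_eq_left hx', hLmin]
        rw [← mul_div_assoc]; exact mul_div_cancel_left₀ _ (hF0 a)
  obtain ⟨L, hLc, hL⟩ := key n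
  refine ⟨fun t => L t, hLc.comp continuous_subtype_val, ?_⟩
  intro t
  have ht : (t:ℝ) ≤ (n:ℝ)/n := by
    rw [div_self (ne_of_gt hnpos)]; exact t.2.2
  rw [hL _ ht]
  simp only [hF]
  congr 1
  exact projIcc_val zero_le_one t

lemma conj_entries (s : ℝ) (X : SL2) (h : IsConjTo X (Umat s)) :
    ∃ p r : ℝ, p^2 + r^2 ≠ 0 ∧
      (X : Matrix (Fin 2) (Fin 2) ℝ) 0 0 = 1 - s*(p*r) ∧
      (X : Matrix (Fin 2) (Fin 2) ℝ) 0 1 = s*p^2 ∧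
      (X : Matrix (Fin 2) (Fin 2) ℝ) 1 0 = -(s*r^2) ∧
      (X : Matrix (Fin 2) (Fin 2) ℝ) 1 1 = 1 + s*(p*r) := by
  obtain ⟨P, hP⟩ := h
  have hdet : (P : Matrix (Fin 2) (Fin 2) ℝ) 0 0 * (P : Matrix (Fin 2) (Fin 2) ℝ) 1 1
      - (P : Matrix (Fin 2) (Fin 2) ℝ) 0 1 * (P : Matrix (Fin 2) (Fin 2) ℝ) 1 0 = 1 := by
    have h2 := P.2
    rwa [Matrix.det_fin_two] at h2
  have hX : (X : Matrix (Fin 2) (Fin 2) ℝ)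
      = (P : Matrix (Fin 2) (Fin 2) ℝ) * !![1, s; 0, 1] * adjugate (P : Matrix (Fin 2) (Fin 2) ℝ) := by
    rw [hP]
    simp [Matrix.SpecialLinearGroup.coe_mul, Matrix.SpecialLinearGroup.coe_inv, Umat]
    rfl
  refine ⟨(P : Matrix (Fin 2) (Fin 2) ℝ) 0 0, (P : Matrix (Fin 2) (Fin 2) ℝ) 1 0, ?_, ?_, ?_, ?_, ?_⟩
  · intro h0
    have hp : (P : Matrix (Fin 2) (Fin 2) ℝ) 0 0 = 0 := by nlinarith [sq_nonneg ((P : Matrix (Fin 2) (Fin 2) ℝ) 0 0), sq_nonneg ((P : Matrix (Fin 2) (Fin 2) ℝ) 1 0)]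
    have hr : (P : Matrix (Fin 2) (Fin 2) ℝ) 1 0 = 0 := by nlinarith [sq_nonneg ((P : Matrix (Fin 2) (Fin 2) ℝ) 0 0), sq_nonneg ((P : Matrix (Fin 2) (Fin 2) ℝ) 1 0)]
    rw [hp, hr] at hdet
    simp at hdet
  all_goals {
    rw [hX]
    simp [Matrix.mul_apply, Fin.sum_univ_two, Matrix.adjugate_fin_two]
    set a00 := (P : Matrix (Fin 2) (Fin 2) ℝ) 0 0 with h00
    set a01 := (P : Matrix (Fin 2) (Fin 2) ℝ) 0 1 with h01
    set a10 := (P : Matrix (Fin 2) (Fin 2) ℝ) 1 0 with h10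
    set a11 := (P : Matrix (Fin 2) (Fin 2) ℝ) 1 1 with h11
    first | linear_combination hdet | ring1 }

/-- Let s ∈ {1,−1} and A : [0,1] → SL(2,ℝ) a continuous path with every A(t) conjugate to
U_s.  Then there is a continuous g : [0,1] → SL(2,ℝ) with g(0) = I and
A(t) = g(t)·A(0)·g(t)⁻¹ for all t. -/
theorem stmt18 (s : ℝ) (hs : s = 1 ∨ s = -1) (A : unitInterval → SL2)
    (hcont : Continuous A) (hconj : ∀ t, IsConjTo (A t) (Umat s)) :
    ∃ g : unitInterval → SL2, Continuous g ∧ g 0 = 1 ∧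
      ∀ t, A t = g t * A 0 * (g t)⁻¹ := by
  have hs2 : s * s = 1 := by rcases hs with h | h <;> rw [h] <;> norm_num
  choose p r hpr2 hE00 hE01 hE10 hE11 using fun t => conj_entries s (A t) (hconj t)
  have hAc : Continuous fun t => (A t : Matrix (Fin 2) (Fin 2) ℝ) :=
    continuous_subtype_val.comp hcont
  have hent : ∀ i j, Continuous fun t => (A t : Matrix (Fin 2) (Fin 2) ℝ) i j :=
    fun i j => (continuous_apply j).comp ((continuous_apply i).comp hAc)
  set z : unitInterval → ℂ := fun t =>
    ((s*((A t : Matrix (Fin 2) (Fin 2) ℝ) 0 1 + (A t : Matrix (Fin 2) (Fin 2) ℝ) 1 0) : ℝ) : ℂ)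
      + ((2*s*(1 - (A t : Matrix (Fin 2) (Fin 2) ℝ) 0 0) : ℝ) : ℂ) * Complex.I with hzdef
  have hsq : ∀ x y : ℝ, ((x:ℂ) + y*Complex.I)^2
      = ((x^2 - y^2 : ℝ) : ℂ) + ((2*x*y : ℝ):ℂ)*Complex.I := by
    intro x y
    apply Complex.ext <;> simp [pow_two] <;> ring
  have hz_eq : ∀ t, z t = ((p t : ℂ) + (r t) * Complex.I)^2 := by
    intro t
    rw [hsq]
    apply Complex.ext
    · simp only [hzdef, Complex.add_re, Complex.ofReal_re, Complex.mul_re, Complex.I_re,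
        Complex.I_im, Complex.ofReal_im]
      rw [hE01 t, hE10 t]
      ring_nf
      linear_combination (p t^2 - r t^2) * hs2
    · simp only [hzdef, Complex.add_im, Complex.ofReal_im, Complex.mul_im, Complex.I_re,
        Complex.I_im, Complex.ofReal_re]
      rw [hE00 t]
      ring_nf
      linear_combination (2 * (p t * r t)) * hs2
  have hz_ne : ∀ t, z t ≠ 0 := by
    intro t
    rw [hz_eq t]
    apply pow_ne_zero
    intro h
    have h1 : p t = 0 := by simpa using congrArg Complex.re h
    have h2 : r t = 0 := by simpa using congrArg Complex.im h
    exact hpr2 t (by rw [h1, h2]; norm_num)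
  have hzc : Continuous z := by
    apply Continuous.add
    · exact Complex.continuous_ofReal.comp (continuous_const.mul ((hent 0 1).add (hent 1 0)))
    · exact (Complex.continuous_ofReal.comp
        (continuous_const.mul (continuous_const.sub (hent 0 0)))).mul continuous_const
  obtain ⟨L, hLc, hL⟩ := exists_exp_lift z hzc hz_ne
  set w : unitInterval → ℂ := fun t => Complex.exp (L t / 2) with hwdef
  have hwc : Continuous w := Complex.continuous_exp.comp (hLc.div_const 2)
  have hw2 : ∀ t, w t ^ 2 = z t := by
    intro t
    calc w t ^ 2 = Complex.exp (L t / 2 + L t / 2) := by rw [pow_two, Complex.exp_add]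
      _ = Complex.exp (L t) := by ring_nf
      _ = z t := hL t
  set v1 : unitInterval → ℝ := fun t => (w t).re with hv1def
  set v2 : unitInterval → ℝ := fun t => (w t).im with hv2def
  have hv1c : Continuous v1 := Complex.continuous_re.comp hwc
  have hv2c : Continuous v2 := Complex.continuous_im.comp hwc
  -- key pointwise facts
  have facts : ∀ t, p t^2 = v1 t^2 ∧ r t^2 = v2 t^2 ∧ p t * r t = v1 t * v2 t
      ∧ 0 < v1 t^2 + v2 t^2 := by
    intro t
    have hww : ((v1 t : ℂ) + v2 t * Complex.I)^2 = ((p t : ℂ) + r t * Complex.I)^2 := by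
      rw [Complex.re_add_im]
      rw [hw2 t, hz_eq t]
    have e := hww
    rw [hsq, hsq] at e
    have E1 : v1 t^2 - v2 t^2 = p t^2 - r t^2 := by
      have h := congrArg Complex.re e
      simp only [Complex.add_re, Complex.ofReal_re, Complex.mul_re, Complex.I_re,
        Complex.I_im, Complex.ofReal_im, mul_zero, zero_mul, sub_zero, zero_sub,
        add_zero, zero_add, mul_one, neg_zero] at h
      linarith
    have E2 : 2 * v1 t * v2 t = 2 * p t * r t := by
      have h := congrArg Complex.im e
      simp only [Complex.add_im, Complex.ofReal_im, Complex.mul_im, Complex.I_re,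
        Complex.I_im, Complex.ofReal_re, mul_zero, zero_mul, sub_zero, zero_sub,
        add_zero, zero_add, mul_one, neg_zero] at h
      linarith
    have E3 : v1 t^2 + v2 t^2 = p t^2 + r t^2 := by
      have h2 : (Complex.normSq ((v1 t : ℂ) + v2 t * Complex.I))^2
          = (Complex.normSq ((p t : ℂ) + r t * Complex.I))^2 := by
        rw [← map_pow, ← map_pow, hww]
      rw [Complex.normSq_add_mul_I, Complex.normSq_add_mul_I] at h2
      have hx : (0:ℝ) ≤ v1 t^2 + v2 t^2 := by positivity
      have hy : (0:ℝ) ≤ p t^2 + r t^2 := by positivity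
      rcases sq_eq_sq_iff_eq_or_eq_neg.mp h2 with h | h
      · exact h
      · linarith
    have hpos : 0 < v1 t^2 + v2 t^2 := by
      rw [E3]
      rcases (lt_or_eq_of_le (by positivity : (0:ℝ) ≤ p t^2 + r t^2)) with h | h
      · exact h
      · exact absurd h.symm (hpr2 t)
    exact ⟨by linarith, by linarith, by linarith, hpos⟩
  have hn0 : ∀ t, v1 t^2 + v2 t^2 ≠ 0 := fun t => ne_of_gt (facts t).2.2.2
  -- entries of A in terms of v1, v2
  have ha' : ∀ t, (A t : Matrix (Fin 2) (Fin 2) ℝ) 0 0 = 1 - s*(v1 t * v2 t) := by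
    intro t; rw [hE00 t]; linear_combination (-s) * (facts t).2.2.1
  have hb' : ∀ t, (A t : Matrix (Fin 2) (Fin 2) ℝ) 0 1 = s*(v1 t^2) := by
    intro t; rw [hE01 t]; linear_combination s * (facts t).1
  have hc' : ∀ t, (A t : Matrix (Fin 2) (Fin 2) ℝ) 1 0 = -(s*(v2 t^2)) := by
    intro t; rw [hE10 t]; linear_combination (-s) * (facts t).2.1
  have hd' : ∀ t, (A t : Matrix (Fin 2) (Fin 2) ℝ) 1 1 = 1 + s*(v1 t * v2 t) := by
    intro t; rw [hE11 t]; linear_combination s * (facts t).2.2.1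
  -- the conjugating family
  set B : unitInterval → SL2 := fun t =>
    ⟨!![v1 t, -(v2 t)/(v1 t^2 + v2 t^2); v2 t, v1 t/(v1 t^2 + v2 t^2)], by
      rw [Matrix.det_fin_two_of]
      field_simp [hn0 t]
      ring⟩ with hBdef
  have hBc : Continuous B := by
    apply Continuous.subtype_mk
    apply continuous_matrix
    intro i j
    fin_cases i <;> fin_cases j <;> simp
    · exact hv1c
    · exact (hv2c.neg).div ((hv1c.pow 2).add (hv2c.pow 2)) hn0
    · exact hv2c
    · exact hv1c.div ((hv1c.pow 2).add (hv2c.pow 2)) hn0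
  have hAB : ∀ t, A t * B t = B t * Umat s := by
    intro t
    apply Subtype.ext
    rw [Matrix.SpecialLinearGroup.coe_mul, Matrix.SpecialLinearGroup.coe_mul]
    show (A t : Matrix (Fin 2) (Fin 2) ℝ) * _ = _ * (Umat s : Matrix (Fin 2) (Fin 2) ℝ)
    ext i j
    fin_cases i <;> fin_cases j <;>
      simp [Matrix.mul_apply, Fin.sum_univ_two, Umat, hBdef] <;>
      simp only [ha' t, hb' t, hc' t, hd' t] <;> (first | ring1 | (field_simp [hn0 t]; ring1))
  have hA : ∀ t, A t = B t * Umat s * (B t)⁻¹ := by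
    intro t
    rw [← hAB t]
    group
  refine ⟨fun t => B t * (B 0)⁻¹, ?_, ?_, ?_⟩
  · apply continuous_induced_rng.mpr
    exact Continuous.matrix_mul (continuous_subtype_val.comp hBc) continuous_const
  · exact mul_inv_cancel (B 0)
  · intro t
    rw [hA t, hA 0]
    group
end

section
/- Let A and B be 2×2 real matrices with det A = 1 and det B = 1, such that A ∉ {I, −I}, B ∉ {I, −I}, and A·B·A⁻¹·B⁻¹ ∈ {I, −I} (i.e., the images of A and B in PSL(2,ℝ) commute and are nontrivial). Then there exists a 2×2 real matrix X with tr X = 0 such that for every real t ≠ 0, writing Cₜ = exp(t·X)·B·exp(t·X)⁻¹ (matrix exponential), one has A·Cₜ·A⁻¹·Cₜ⁻¹ ∉ {I, −I} (i.e., the images of A and Cₜ in PSL(2,ℝ) do not commute). -/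
open Matrix

theorem stmt19_exp_sq_zero (N : Matrix (Fin 2) (Fin 2) ℝ) (h : N * N = 0) :
    NormedSpace.exp N = 1 + N := by
  rw [NormedSpace.exp_eq_tsum (𝕂 := ℝ)]
  simp only []
  rw [tsum_eq_sum (s := Finset.range 2)]
  · simp [Finset.sum_range_succ]
  · intro n hn
    have h2 : N ^ 2 = 0 := by rw [pow_two]; exact h
    have hz : N ^ n = 0 := by
      have : n = 2 + (n - 2) := by simp at hn; omega
      rw [this, pow_add, h2, zero_mul]
    simp [hz]

theorem stmt19_one_sub_mul (M : Matrix (Fin 2) (Fin 2) ℝ) (hM : M * M = 0) :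
    (1 + M) * (1 - M) = 1 ∧ (1 - M) * (1 + M) = 1 := by
  constructor
  · have : (1 + M) * (1 - M) = 1 - M * M := by noncomm_ring
    rw [this, hM, sub_zero]
  · have : (1 - M) * (1 + M) = 1 - M * M := by noncomm_ring
    rw [this, hM, sub_zero]

theorem stmt19_conj_form (B : Matrix (Fin 2) (Fin 2) ℝ) (hdBu : IsUnit B.det)
    (N : Matrix (Fin 2) (Fin 2) ℝ) (hNN : N * N = 0) (t : ℝ)
    (C : Matrix (Fin 2) (Fin 2) ℝ)
    (hC : C = NormedSpace.exp (t • N) * B * (NormedSpace.exp (t • N))⁻¹) :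
    C = (1 + t • N) * B * (1 - t • N) ∧ IsUnit C.det ∧
      Matrix.trace C = Matrix.trace B := by
  have hx : (t • N) * (t • N) = 0 := by
    rw [smul_mul_assoc, mul_smul_comm, hNN, smul_zero, smul_zero]
  have hexp : NormedSpace.exp (t • N) = 1 + t • N := stmt19_exp_sq_zero _ hx
  obtain ⟨hPQ, hQP⟩ := stmt19_one_sub_mul (t • N) hx
  have hPinv : (1 + t • N)⁻¹ = 1 - t • N := Matrix.inv_eq_right_inv hPQ
  rw [hexp, hPinv] at hC
  refine ⟨hC, ?_, ?_⟩
  · have hCD : C * ((1 + t • N) * B⁻¹ * (1 - t • N)) = 1 := by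
      rw [hC]
      calc (1 + t • N) * B * (1 - t • N) * ((1 + t • N) * B⁻¹ * (1 - t • N))
          = (1 + t • N) * (B * ((1 - t • N) * (1 + t • N)) * B⁻¹) * (1 - t • N) := by
            simp only [Matrix.mul_assoc]
        _ = 1 := by rw [hQP, mul_one, Matrix.mul_nonsing_inv B hdBu, mul_one, hPQ]
    exact Matrix.isUnit_det_of_right_inverse hCD
  · rw [hC, Matrix.trace_mul_comm, ← Matrix.mul_assoc, hQP, one_mul]

theorem stmt19_comm_of_one (A C : Matrix (Fin 2) (Fin 2) ℝ) (hAu : IsUnit A.det)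
    (hCu : IsUnit C.det) (h : A * C * A⁻¹ * C⁻¹ = 1) : A * C = C * A := by
  have e1 : A * C * A⁻¹ = C := by
    calc A * C * A⁻¹ = A * C * A⁻¹ * (C⁻¹ * C) := by
          rw [Matrix.nonsing_inv_mul C hCu, mul_one]
      _ = (A * C * A⁻¹ * C⁻¹) * C := by simp only [Matrix.mul_assoc]
      _ = C := by rw [h, one_mul]
  calc A * C = A * C * (A⁻¹ * A) := by rw [Matrix.nonsing_inv_mul A hAu, mul_one]
    _ = (A * C * A⁻¹) * A := by simp only [Matrix.mul_assoc]
    _ = C * A := by rw [e1]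

theorem stmt19_anticomm_of_negone (A C : Matrix (Fin 2) (Fin 2) ℝ) (hAu : IsUnit A.det)
    (hCu : IsUnit C.det) (h : A * C * A⁻¹ * C⁻¹ = -1) : A * C = -(C * A) := by
  have e1 : A * C * A⁻¹ = -C := by
    calc A * C * A⁻¹ = A * C * A⁻¹ * (C⁻¹ * C) := by
          rw [Matrix.nonsing_inv_mul C hCu, mul_one]
      _ = (A * C * A⁻¹ * C⁻¹) * C := by simp only [Matrix.mul_assoc]
      _ = -C := by rw [h, neg_one_mul]
  calc A * C = A * C * (A⁻¹ * A) := by rw [Matrix.nonsing_inv_mul A hAu, mul_one]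
    _ = (A * C * A⁻¹) * A := by simp only [Matrix.mul_assoc]
    _ = -(C * A) := by rw [e1, neg_mul]

theorem stmt19_anticomm_trace (A C : Matrix (Fin 2) (Fin 2) ℝ) (hC : IsUnit C.det)
    (h : A * C = -(C * A)) : Matrix.trace A = 0 := by
  have h1 : A = -(C * A * C⁻¹) := by
    calc A = A * C * C⁻¹ := by rw [mul_assoc, Matrix.mul_nonsing_inv C hC, mul_one]
    _ = -(C*A) * C⁻¹ := by rw [h]
    _ = -(C*A*C⁻¹) := by rw [neg_mul]
  have h2 : Matrix.trace (C * A * C⁻¹) = Matrix.trace A := by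
    rw [Matrix.mul_assoc, Matrix.trace_mul_comm, Matrix.mul_assoc,
      Matrix.nonsing_inv_mul C hC, mul_one]
  have h3 := congrArg Matrix.trace h1
  rw [Matrix.trace_neg, h2] at h3
  linarith

theorem stmt19_negone_fin_two : (-1 : Matrix (Fin 2) (Fin 2) ℝ) = !![-1,0;0,-1] := by
  ext i j; fin_cases i <;> fin_cases j <;> simp [Matrix.one_apply]

set_option maxHeartbeats 2000000 in
/-- Let A, B be 2×2 real matrices of determinant 1, with A, B ∉ {I, −I} and
A·B·A⁻¹·B⁻¹ ∈ {I, −I}.  Then there is a traceless 2×2 matrix X such that for every t ≠ 0,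
setting C = exp(t·X)·B·exp(t·X)⁻¹, one has A·C·A⁻¹·C⁻¹ ∉ {I, −I}. -/
theorem stmt19 (A B : Matrix (Fin 2) (Fin 2) ℝ)
    (hdetA : A.det = 1) (hdetB : B.det = 1)
    (hA1 : A ≠ 1) (hA2 : A ≠ -1) (hB1 : B ≠ 1) (hB2 : B ≠ -1)
    (hcomm : A * B * A⁻¹ * B⁻¹ = 1 ∨ A * B * A⁻¹ * B⁻¹ = -1) :
    ∃ X : Matrix (Fin 2) (Fin 2) ℝ, Matrix.trace X = 0 ∧
      ∀ t : ℝ, t ≠ 0 → ∀ C : Matrix (Fin 2) (Fin 2) ℝ,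
        C = NormedSpace.exp (t • X) * B * (NormedSpace.exp (t • X))⁻¹ →
          A * C * A⁻¹ * C⁻¹ ≠ 1 ∧ A * C * A⁻¹ * C⁻¹ ≠ -1 := by
  have hdAu : IsUnit A.det := by rw [hdetA]; exact isUnit_one
  have hdBu : IsUnit B.det := by rw [hdetB]; exact isUnit_one
  obtain ⟨a, b, c, d, hAe⟩ : ∃ a b c d, A = !![a,b;c,d] := ⟨_,_,_,_, Matrix.eta_fin_two A⟩
  obtain ⟨p, q, r, s, hBe⟩ : ∃ p q r s, B = !![p,q;r,s] := ⟨_,_,_,_, Matrix.eta_fin_two B⟩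
  subst hAe; subst hBe
  have hdA : a*d - b*c = 1 := by simpa [Matrix.det_fin_two_of] using hdetA
  have hdB : p*s - q*r = 1 := by simpa [Matrix.det_fin_two_of] using hdetB
  rcases hcomm with hcm | hcm
  · -- PSL-commuting lift: A*B = B*A
    have hAB := stmt19_comm_of_one _ _ hdAu hdBu hcm
    have g00 : a*p + b*r = p*a + q*c := by
      have := Matrix.ext_iff.2 hAB 0 0
      simpa [Matrix.mul_apply, Fin.sum_univ_two] using this
    have g01 : a*q + b*s = p*b + q*d := by
      have := Matrix.ext_iff.2 hAB 0 1
      simpa [Matrix.mul_apply, Fin.sum_univ_two] using this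
    have g10 : c*p + d*r = r*a + s*c := by
      have := Matrix.ext_iff.2 hAB 1 0
      simpa [Matrix.mul_apply, Fin.sum_univ_two] using this
    by_cases hc : c = 0
    · by_cases hb : b = 0
      · -- diagonal case: b = c = 0, N = e12
        subst hb; subst hc
        have hdA' : a*d = 1 := by linear_combination hdA
        have hne : a ≠ d := by
          intro he
          have h2 : (a-1)*(a+1) = 0 := by linear_combination hdA' + a*he
          rcases mul_eq_zero.mp h2 with h' | h'
          · refine hA1 ?_
            rw [show a = (1:ℝ) by linarith, show d = (1:ℝ) by linarith [he]]
            exact Matrix.one_fin_two.symm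
          · refine hA2 ?_
            rw [show a = (-1:ℝ) by linarith, show d = (-1:ℝ) by linarith [he]]
            exact stmt19_negone_fin_two.symm
        have hq : q = 0 := by
          have h2 : q*(a - d) = 0 := by linear_combination g01
          rcases mul_eq_zero.mp h2 with h' | h'
          · exact h'
          · exact absurd (by linarith : a = d) hne
        have hr : r = 0 := by
          have h2 : r*(a - d) = 0 := by linear_combination -g10
          rcases mul_eq_zero.mp h2 with h' | h'
          · exact h'
          · exact absurd (by linarith : a = d) hne
        subst hq; subst hr
        have hne2 : p ≠ s := by
          intro he
          have h2 : (p-1)*(p+1) = 0 := by linear_combination hdB + p*he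
          rcases mul_eq_zero.mp h2 with h' | h'
          · refine hB1 ?_
            rw [show p = (1:ℝ) by linarith, show s = (1:ℝ) by linarith [he]]
            exact Matrix.one_fin_two.symm
          · refine hB2 ?_
            rw [show p = (-1:ℝ) by linarith, show s = (-1:ℝ) by linarith [he]]
            exact stmt19_negone_fin_two.symm
        refine ⟨!![0,1;0,0], by simp [Matrix.trace_fin_two_of], ?_⟩
        intro t ht C hC
        have hNN : (!![0,1;0,0] : Matrix (Fin 2) (Fin 2) ℝ) * !![0,1;0,0] = 0 := by
          ext i j; fin_cases i <;> fin_cases j <;> simp [Matrix.mul_apply, Fin.sum_univ_two]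
        obtain ⟨hCf, hCu, hCtr⟩ := stmt19_conj_form _ hdBu _ hNN t C hC
        have hP : (1 : Matrix (Fin 2) (Fin 2) ℝ) + t • !![0,1;0,0] = !![1,t;0,1] := by
          ext i j; fin_cases i <;> fin_cases j <;> simp [Matrix.one_apply]
        have hQ : (1 : Matrix (Fin 2) (Fin 2) ℝ) - t • !![0,1;0,0] = !![1,-t;0,1] := by
          ext i j; fin_cases i <;> fin_cases j <;> simp [Matrix.one_apply]
        rw [hP, hQ] at hCf
        have hCex : C = !![p, t*(s-p); 0, s] := by
          rw [hCf]; ext i j; fin_cases i <;> fin_cases j <;>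
            simp [Matrix.mul_apply, Fin.sum_univ_two] <;> ring
        constructor
        · intro h
          have hACCA := stmt19_comm_of_one _ _ hdAu hCu h
          rw [hCex] at hACCA
          have e01 : a*(t*(s-p)) + 0*s = p*0 + t*(s-p)*d := by
            have := Matrix.ext_iff.2 hACCA 0 1
            simpa [Matrix.mul_apply, Fin.sum_univ_two] using this
          have h2 : t*((s-p)*(a-d)) = 0 := by linear_combination e01
          rcases mul_eq_zero.mp h2 with h' | h'
          · exact ht h'
          · rcases mul_eq_zero.mp h' with h'' | h''
            · exact hne2 (by linarith)
            · exact hne (by linarith)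
        · intro h
          exfalso
          have hACCA := stmt19_anticomm_of_negone _ _ hdAu hCu h
          have htrA : Matrix.trace !![a,(0:ℝ);0,d] = 0 :=
            stmt19_anticomm_trace _ _ hCu hACCA
          have had : a + d = 0 := by simpa [Matrix.trace_fin_two_of] using htrA
          have hd : d = -a := by linarith
          rw [hd] at hdA'
          nlinarith [sq_nonneg a]
      · -- c = 0, b ≠ 0 : N = e21
        refine ⟨!![0,0;1,0], by simp [Matrix.trace_fin_two_of], ?_⟩
        intro t ht C hC
        have hNN : (!![0,0;1,0] : Matrix (Fin 2) (Fin 2) ℝ) * !![0,0;1,0] = 0 := by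
          ext i j; fin_cases i <;> fin_cases j <;> simp [Matrix.mul_apply, Fin.sum_univ_two]
        obtain ⟨hCf, hCu, hCtr⟩ := stmt19_conj_form _ hdBu _ hNN t C hC
        have hP : (1 : Matrix (Fin 2) (Fin 2) ℝ) + t • !![0,0;1,0] = !![1,0;t,1] := by
          ext i j; fin_cases i <;> fin_cases j <;> simp [Matrix.one_apply]
        have hQ : (1 : Matrix (Fin 2) (Fin 2) ℝ) - t • !![0,0;1,0] = !![1,0;-t,1] := by
          ext i j; fin_cases i <;> fin_cases j <;> simp [Matrix.one_apply]
        rw [hP, hQ] at hCf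
        have hCex : C = !![p - t*q, q; r + t*(p - s) - t^2*q, s + t*q] := by
          rw [hCf]; ext i j; fin_cases i <;> fin_cases j <;>
            simp [Matrix.mul_apply, Fin.sum_univ_two] <;> ring
        constructor
        · intro h
          have hACCA := stmt19_comm_of_one _ _ hdAu hCu h
          rw [hCex] at hACCA
          have e01 : a*q + b*(s + t*q) = (p - t*q)*b + q*d := by
            have := Matrix.ext_iff.2 hACCA 0 1
            simpa [Matrix.mul_apply, Fin.sum_univ_two] using this
          have h2 : t*(b*q) = 0 := by linear_combination (e01 - g01)/2
          have hq : q = 0 := by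
            rcases mul_eq_zero.mp h2 with h' | h'
            · exact absurd h' ht
            · rcases mul_eq_zero.mp h' with h'' | h''
              · exact absurd h'' hb
              · exact h''
          subst hq
          have hr : r = 0 := by
            have h3 : b*r = 0 := by linear_combination g00
            rcases mul_eq_zero.mp h3 with h' | h'
            · exact absurd h' hb
            · exact h'
          subst hr
          have hsp : p = s := by
            have h3 : b*(s - p) = 0 := by linear_combination g01
            rcases mul_eq_zero.mp h3 with h' | h'
            · exact absurd h' hb
            · linarith
          have hp2 : (p - 1)*(p + 1) = 0 := by linear_combination hdB + p*hsp
          rcases mul_eq_zero.mp hp2 with h' | h'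
          · refine hB1 ?_
            rw [show p = (1:ℝ) by linarith, show s = (1:ℝ) by linarith [hsp]]
            exact Matrix.one_fin_two.symm
          · refine hB2 ?_
            rw [show p = (-1:ℝ) by linarith, show s = (-1:ℝ) by linarith [hsp]]
            exact stmt19_negone_fin_two.symm
        · intro h
          exfalso
          have hACCA := stmt19_anticomm_of_negone _ _ hdAu hCu h
          have htrA : Matrix.trace !![a,b;c,d] = 0 :=
            stmt19_anticomm_trace _ _ hCu hACCA
          have had : a + d = 0 := by simpa [Matrix.trace_fin_two_of] using htrA
          have hd : d = -a := by linarith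
          have had1 : a*d = 1 := by linear_combination hdA + b*hc
          rw [hd] at had1
          nlinarith [sq_nonneg a]
    · -- c ≠ 0, take N = e12
      refine ⟨!![0,1;0,0], by simp [Matrix.trace_fin_two_of], ?_⟩
      intro t ht C hC
      have hNN : (!![0,1;0,0] : Matrix (Fin 2) (Fin 2) ℝ) * !![0,1;0,0] = 0 := by
        ext i j; fin_cases i <;> fin_cases j <;> simp [Matrix.mul_apply, Fin.sum_univ_two]
      obtain ⟨hCf, hCu, hCtr⟩ := stmt19_conj_form _ hdBu _ hNN t C hC
      have hP : (1 : Matrix (Fin 2) (Fin 2) ℝ) + t • !![0,1;0,0] = !![1,t;0,1] := by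
        ext i j; fin_cases i <;> fin_cases j <;> simp [Matrix.one_apply]
      have hQ : (1 : Matrix (Fin 2) (Fin 2) ℝ) - t • !![0,1;0,0] = !![1,-t;0,1] := by
        ext i j; fin_cases i <;> fin_cases j <;> simp [Matrix.one_apply]
      rw [hP, hQ] at hCf
      have hCex : C = !![p + t*r, q + t*(s-p) - t^2*r; r, s - t*r] := by
        rw [hCf]; ext i j; fin_cases i <;> fin_cases j <;>
          simp [Matrix.mul_apply, Fin.sum_univ_two] <;> ring
      constructor
      · intro h
        have hACCA := stmt19_comm_of_one _ _ hdAu hCu h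
        rw [hCex] at hACCA
        have e10 : c*(p + t*r) + d*r = r*a + (s - t*r)*c := by
          have := Matrix.ext_iff.2 hACCA 1 0
          simpa [Matrix.mul_apply, Fin.sum_univ_two] using this
        have h2 : t*(c*r) = 0 := by linear_combination (e10 - g10)/2
        have hr : r = 0 := by
          rcases mul_eq_zero.mp h2 with h' | h'
          · exact absurd h' ht
          · rcases mul_eq_zero.mp h' with h'' | h''
            · exact absurd h'' hc
            · exact h''
        subst hr
        have hq : q = 0 := by
          have hqc : q*c = 0 := by linear_combination -g00
          rcases mul_eq_zero.mp hqc with h' | h'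
          · exact h'
          · exact absurd h' hc
        subst hq
        have hsp : p = s := by
          have h2 : c*(p - s) = 0 := by linear_combination g10
          rcases mul_eq_zero.mp h2 with h' | h'
          · exact absurd h' hc
          · linarith
        have hp2 : (p - 1)*(p + 1) = 0 := by linear_combination hdB + p*hsp
        rcases mul_eq_zero.mp hp2 with h' | h'
        · refine hB1 ?_
          rw [show p = (1:ℝ) by linarith, show s = (1:ℝ) by linarith [hsp]]
          exact Matrix.one_fin_two.symm
        · refine hB2 ?_
          rw [show p = (-1:ℝ) by linarith, show s = (-1:ℝ) by linarith [hsp]]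
          exact stmt19_negone_fin_two.symm
      · intro h
        have hACCA := stmt19_anticomm_of_negone _ _ hdAu hCu h
        have htrA : Matrix.trace !![a,b;c,d] = 0 := stmt19_anticomm_trace _ _ hCu hACCA
        have htrC : Matrix.trace C = 0 :=
          stmt19_anticomm_trace _ _ hdAu (by rw [hACCA, neg_neg])
        have htrB : Matrix.trace (!![p,q;r,s] : Matrix (Fin 2) (Fin 2) ℝ) = 0 := by
          rw [← hCtr]; exact htrC
        have had : a + d = 0 := by simpa [Matrix.trace_fin_two_of] using htrA
        have hps : p + s = 0 := by simpa [Matrix.trace_fin_two_of] using htrB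
        have hd : d = -a := by linarith
        have hs : s = -p := by linarith
        subst hd; subst hs
        rw [hCex] at hACCA
        have e00 : a*(p + t*r) + b*r
            = -((p + t*r)*a + (q + t*(-p - p) - t^2*r)*c) := by
          have := Matrix.ext_iff.2 hACCA 0 0
          simpa [Matrix.mul_apply, Fin.sum_univ_two] using this
        exfalso
        have G1 : b*r = q*c := by linear_combination g00
        have G2 : c*p = a*r := by linear_combination g10/2
        have hr2 : r^2 = c^2 := by
          linear_combination (c^2)*hdB - (r^2)*hdA + (c*p + a*r)*G2 - (c*r)*G1
        have e1 : 2*a*p + 2*b*r - t^2*r*c = 0 := by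
          linear_combination e00 + G1 + 2*t*G2
        have e2 : r * (2 + t^2*r^2) = 0 := by
          linear_combination -c*e1 + 2*a*G2 + t^2*r*hr2 - 2*r*hdA
        have hr0 : r = 0 := by
          rcases mul_eq_zero.mp e2 with h' | h'
          · exact h'
          · nlinarith [sq_nonneg (t*r)]
        have hc0 : c = 0 := by
          have h3 : c^2 = 0 := by rw [← hr2, hr0]; ring
          exact pow_eq_zero_iff (by norm_num) |>.mp h3
        exact hc hc0
  · -- anticommuting lift: vacuous
    exfalso
    have hAB := stmt19_anticomm_of_negone _ _ hdAu hdBu hcm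
    have htrA : Matrix.trace !![a,b;c,d] = 0 := stmt19_anticomm_trace _ _ hdBu hAB
    have htrB : Matrix.trace !![p,q;r,s] = 0 :=
      stmt19_anticomm_trace _ _ hdAu (by rw [hAB, neg_neg])
    have had : a + d = 0 := by simpa [Matrix.trace_fin_two_of] using htrA
    have hps : p + s = 0 := by simpa [Matrix.trace_fin_two_of] using htrB
    have hd : d = -a := by linarith
    have hs : s = -p := by linarith
    subst hd; subst hs
    have e00 : a*p + b*r = -(p*a + q*c) := by
      have := Matrix.ext_iff.2 hAB 0 0
      simpa [Matrix.mul_apply, Fin.sum_univ_two] using this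
    have key : (c*p - a*r)^2 + r^2 + c^2 = 0 := by
      linear_combination (-(c^2))*hdB - r^2*hdA - (c*r)*e00
    have hc0 : c = 0 := by
      have h1 : c^2 = 0 := by nlinarith [sq_nonneg (c*p - a*r), sq_nonneg r, sq_nonneg c]
      exact pow_eq_zero_iff (by norm_num) |>.mp h1
    rw [hc0] at hdA
    nlinarith [sq_nonneg a]
end
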